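/- For a sequence-form polytope co X, the set of linear maps φ : co X → co X equals the set of maps x ↦ Ax for matrices A that are the A-component of some pair (A,B) satisfying the UTC constraint system. That is, the set of UTC deviations coincides exactly with the set of linear deviations. -/

import Mathlib

/-- A tree-form decision problem: sequences `Seq` (observation points, with root `∅`),
decision points `Dp`, where `seqs j` is the set of sequences `ja` for actions `a ∈ A_j`,
`parentSeq j = p_j`, `parentDp σ` the decision point immediately preceding `σ` (none for the root),
`children σ = C_σ`, and `depth` counts the number of decision points above a sequence. -/
structure TFDP where
  Seq : Type
  Dp : Type
  [finSeq : Fintype Seq]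
  [decSeq : DecidableEq Seq]
  [finDp : Fintype Dp]
  [decDp : DecidableEq Dp]
  root : Seq
  seqs : Dp → Finset Seq
  parentSeq : Dp → Seq
  parentDp : Seq → Option Dp
  children : Seq → Finset Dp
  depth : Seq → ℕ
  seqs_nonempty : ∀ j, (seqs j).Nonempty
  mem_children : ∀ σ j, j ∈ children σ ↔ parentSeq j = σ
  parentDp_spec : ∀ σ j, parentDp σ = some j ↔ σ ∈ seqs j
  parentDp_root : parentDp root = none
  depth_root : depth root = 0
  depth_seq : ∀ j, ∀ σ ∈ seqs j, depth σ = depth (parentSeq j) + 1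

attribute [instance] TFDP.finSeq TFDP.decSeq TFDP.finDp TFDP.decDp

namespace TFDP

variable (T : TFDP)

/-- The sequence-form polytope `co X`. -/
def poly : Set (T.Seq → ℝ) :=
  {x | (∀ σ, 0 ≤ x σ) ∧ x T.root = 1 ∧ ∀ j, x (T.parentSeq j) = ∑ σ ∈ T.seqs j, x σ}

/-- The pure (0/1) sequence-form strategies `X`. -/
def pureStrats : Set (T.Seq → ℝ) :=
  {x ∈ T.poly | ∀ σ, x σ = 0 ∨ x σ = 1}

/-- Matrix-vector multiplication for `Seq × Seq` matrices. -/
def mulVec (A : T.Seq → T.Seq → ℝ) (x : T.Seq → ℝ) : T.Seq → ℝ :=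
  fun σ => ∑ σ' : T.Seq, A σ σ' * x σ'

/-- `B(j, p_σ)`, with the convention `B(j, p_∅) := 0`. -/
def Bp (B : T.Dp → T.Dp → ℝ) (j : T.Dp) (σ : T.Seq) : ℝ :=
  (T.parentDp σ).elim 0 (B j)

/-- The UTC constraint system for a pair `(A, B)`. -/
def UTC (A : T.Seq → T.Seq → ℝ) (B : T.Dp → T.Dp → ℝ) : Prop :=
  (∀ (j : T.Dp) (σ' : T.Seq),
      A (T.parentSeq j) σ' + T.Bp B j σ'
        = (∑ σ ∈ T.seqs j, A σ σ') + ∑ j' ∈ T.children σ', B j j')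
  ∧ A T.root T.root = 1
  ∧ (∀ σ', σ' ≠ T.root → A T.root σ' = 0)
  ∧ (∀ σ σ', 0 ≤ A σ σ')
  ∧ (∀ j j', 0 ≤ B j j')

end TFDP

/-!
Write `c_j := e_{p_j} - 𝟙_{A_j}` (`constraintVec j`), so that `x ∈ co X` iff `x ≥ 0`, `x(∅) = 1`
and `c_j ⬝ x = 0` for all `j`. The flow part of the UTC system says exactly that
`c_jᵀ A = ∑_{j'} B(j,j') c_{j'}`, so a UTC matrix maps `co X` into itself.

Conversely, let `A` map `co X` into itself. Adding multiples of the `c_j` to a row does not change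
it on `co X`; doing so bottom-up turns every row into a nonnegative row that vanishes at some action
of each decision point (nonnegativity at sequences without parent comes from testing against pure
strategies). The defects `c_jᵀ A` vanish on `co X`, which contains a strictly positive point, so
they lie in the span of the `c_{j'}`. Pairing with the pure strategy below an action of `j'` that
only plays actions where row `p_j` vanishes shows that the coefficient of `c_{j'}` is nonnegative.
-/

namespace TFDP

open Matrix

variable {T : TFDP}

lemma mulVec_eq (A : T.Seq → T.Seq → ℝ) (x : T.Seq → ℝ) : T.mulVec A x = of A *ᵥ x := rfl

lemma eq_of_mem_seqs {σ : T.Seq} {j j' : T.Dp} (h : σ ∈ T.seqs j) (h' : σ ∈ T.seqs j') :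
    j = j' :=
  Option.some_injective _ <|
    ((T.parentDp_spec σ j).2 h).symm.trans ((T.parentDp_spec σ j').2 h')

lemma notMem_seqs_of_parentDp_eq_none {σ : T.Seq} (hσ : T.parentDp σ = none) (j : T.Dp) :
    σ ∉ T.seqs j := fun h => by
  simp [(T.parentDp_spec σ j).2 h] at hσ

lemma root_notMem_seqs (j : T.Dp) : T.root ∉ T.seqs j :=
  notMem_seqs_of_parentDp_eq_none T.parentDp_root j

lemma depth_parentSeq_lt_of_mem_seqs {σ : T.Seq} {j : T.Dp} (h : σ ∈ T.seqs j) :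
    T.depth (T.parentSeq j) < T.depth σ := by
  rw [T.depth_seq j σ h]; omega

variable (T) in
def constraintVec (j : T.Dp) : T.Seq → ℝ :=
  Pi.single (T.parentSeq j) 1 - ∑ σ ∈ T.seqs j, Pi.single σ 1

lemma constraintVec_dotProduct (j : T.Dp) (x : T.Seq → ℝ) :
    T.constraintVec j ⬝ᵥ x = x (T.parentSeq j) - ∑ σ ∈ T.seqs j, x σ := by
  simp [constraintVec, sub_dotProduct, sum_dotProduct, single_dotProduct]

lemma constraintVec_apply (j : T.Dp) (τ : T.Seq) :
    T.constraintVec j τ =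
      (if τ = T.parentSeq j then 1 else 0) - if τ ∈ T.seqs j then 1 else 0 := by
  simp [constraintVec, Finset.sum_apply, Pi.single_apply]

lemma mem_poly_iff {x : T.Seq → ℝ} :
    x ∈ T.poly ↔ (∀ σ, 0 ≤ x σ) ∧ x T.root = 1 ∧ ∀ j, T.constraintVec j ⬝ᵥ x = 0 := by
  simp only [poly, Set.mem_ofPred_eq, constraintVec_dotProduct, sub_eq_zero]

lemma constraintVec_dotProduct_eq_zero {x : T.Seq → ℝ} (hx : x ∈ T.poly) (j : T.Dp) :
    T.constraintVec j ⬝ᵥ x = 0 :=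
  (mem_poly_iff.1 hx).2.2 j

lemma sum_smul_constraintVec_apply (b : T.Dp → ℝ) (σ : T.Seq) :
    (∑ j, b j • T.constraintVec j) σ = ∑ j ∈ T.children σ, b j - (T.parentDp σ).elim 0 b := by
  have hparent : ∑ j, (if σ ∈ T.seqs j then b j else 0) = (T.parentDp σ).elim 0 b := by
    rcases h : T.parentDp σ with _ | j
    · exact Finset.sum_eq_zero fun j _ => if_neg (notMem_seqs_of_parentDp_eq_none h j)
    · rw [Finset.sum_eq_single j (fun j' _ hj' => if_neg fun h' => hj' (eq_of_mem_seqs h'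
        ((T.parentDp_spec σ j).1 h))) (by simp), if_pos ((T.parentDp_spec σ j).1 h)]
      rfl
  simp only [Finset.sum_apply, Pi.smul_apply, constraintVec_apply, smul_eq_mul, mul_sub,
    mul_ite, mul_one, mul_zero, Finset.sum_sub_distrib, hparent, ← Finset.sum_filter]
  congr 2
  ext j
  simp [T.mem_children, eq_comm]

lemma vecMul_constraintVec_apply (j : T.Dp) (A : T.Seq → T.Seq → ℝ) (σ' : T.Seq) :
    (T.constraintVec j ᵥ* of A) σ' = A (T.parentSeq j) σ' - ∑ σ ∈ T.seqs j, A σ σ' :=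
  constraintVec_dotProduct j _

lemma utc_flow_iff {A : T.Seq → T.Seq → ℝ} {B : T.Dp → T.Dp → ℝ} :
    (∀ j σ', A (T.parentSeq j) σ' + T.Bp B j σ'
        = (∑ σ ∈ T.seqs j, A σ σ') + ∑ j' ∈ T.children σ', B j j') ↔
      ∀ j, T.constraintVec j ᵥ* of A = ∑ j', B j j' • T.constraintVec j' := by
  refine forall_congr' fun j => ?_
  simp only [funext_iff, vecMul_constraintVec_apply, sum_smul_constraintVec_apply, Bp]
  exact forall_congr' fun σ' => by constructor <;> intro h <;> linarith

lemma mulVec_mem_poly_of_utc {A : T.Seq → T.Seq → ℝ} {B : T.Dp → T.Dp → ℝ} (h : T.UTC A B)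
    {x : T.Seq → ℝ} (hx : x ∈ T.poly) : of A *ᵥ x ∈ T.poly := by
  obtain ⟨hflow, hroot, hroot', hA, -⟩ := h
  have hrow : A T.root = Pi.single T.root 1 := funext fun σ' => by
    by_cases h : σ' = T.root
    · subst h; simpa using hroot
    · simpa [h] using hroot' σ' h
  obtain ⟨hx0, hx1, hxc⟩ := mem_poly_iff.1 hx
  refine mem_poly_iff.2 ⟨fun σ => Finset.sum_nonneg fun σ' _ => mul_nonneg (hA σ σ') (hx0 σ'),
    ?_, fun j => ?_⟩
  · show A T.root ⬝ᵥ x = 1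
    rw [hrow, single_dotProduct, one_mul, hx1]
  · simp [dotProduct_mulVec, utc_flow_iff.1 hflow j, sum_dotProduct, smul_dotProduct, hxc]

variable (T) in
def IsPolicy (π : T.Dp → T.Seq) : Prop := ∀ j, π j ∈ T.seqs j

variable (T) in
def PolicyStep (π : T.Dp → T.Seq) (σ τ : T.Seq) : Prop := ∃ j, T.parentSeq j = σ ∧ π j = τ

open Classical in
variable (T) in
/-- The pure sequence-form strategy of the subtree at `ρ` that plays `π`. -/
noncomputable def continuation (π : T.Dp → T.Seq) (ρ τ : T.Seq) : ℝ :=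
  if Relation.ReflTransGen (T.PolicyStep π) ρ τ then 1 else 0

section continuation

variable {π : T.Dp → T.Seq} {ρ τ : T.Seq}

lemma continuation_nonneg : 0 ≤ T.continuation π ρ τ := by
  unfold continuation; split_ifs <;> norm_num

lemma continuation_self : T.continuation π ρ ρ = 1 :=
  if_pos Relation.ReflTransGen.refl

lemma eq_or_exists_of_continuation_ne_zero (h : T.continuation π ρ τ ≠ 0) :
    τ = ρ ∨ ∃ j, π j = τ := by
  unfold continuation at h
  split_ifs at h with hr
  · rcases (Relation.ReflTransGen.cases_tail_iff _ _ _).1 hr with rfl | ⟨σ, -, j, -, rfl⟩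
    · exact .inl rfl
    · exact .inr ⟨j, rfl⟩
  · exact absurd rfl h

lemma depth_le_of_reflTransGen (hπ : T.IsPolicy π)
    (h : Relation.ReflTransGen (T.PolicyStep π) ρ τ) : T.depth ρ ≤ T.depth τ := by
  induction h with
  | refl => rfl
  | tail _ hstep ih =>
    obtain ⟨j, rfl, rfl⟩ := hstep
    exact ih.trans (depth_parentSeq_lt_of_mem_seqs (hπ j)).le

lemma continuation_root (hπ : T.IsPolicy π) (hρ : ρ ≠ T.root) :
    T.continuation π ρ T.root = 0 :=
  by_contra fun h => by
    rcases eq_or_exists_of_continuation_ne_zero h with h | ⟨j, hj⟩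
    · exact hρ h.symm
    · exact root_notMem_seqs j (hj ▸ hπ j)

lemma continuation_of_mem_seqs (hπ : T.IsPolicy π) {j : T.Dp} {σ : T.Seq} (hσ : σ ∈ T.seqs j) :
    T.continuation π ρ σ = (if σ = ρ then 1 else 0) +
      if σ = π j then T.continuation π ρ (T.parentSeq j) else 0 := by
  have hreach : Relation.ReflTransGen (T.PolicyStep π) ρ σ ↔
      σ = ρ ∨ σ = π j ∧ Relation.ReflTransGen (T.PolicyStep π) ρ (T.parentSeq j) := by
    rw [Relation.ReflTransGen.cases_tail_iff]
    refine or_congr_right ⟨?_, ?_⟩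
    · rintro ⟨_, hr, j', rfl, rfl⟩
      obtain rfl := eq_of_mem_seqs (hπ j') hσ
      exact ⟨rfl, hr⟩
    · rintro ⟨rfl, hr⟩
      exact ⟨_, hr, j, rfl, rfl⟩
  by_cases hσρ : σ = ρ
  · subst hσρ
    have hnot : ¬Relation.ReflTransGen (T.PolicyStep π) σ (T.parentSeq j) := fun hr =>
      (depth_le_of_reflTransGen hπ hr).not_gt (depth_parentSeq_lt_of_mem_seqs hσ)
    simp [continuation, hnot, Relation.ReflTransGen.refl]
  · simp only [continuation, hreach, hσρ, false_or, if_false, zero_add]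
    split_ifs <;> tauto

lemma constraintVec_dotProduct_continuation (hπ : T.IsPolicy π) (j : T.Dp) :
    T.constraintVec j ⬝ᵥ T.continuation π ρ = -if ρ ∈ T.seqs j then 1 else 0 := by
  rw [constraintVec_dotProduct, Finset.sum_congr rfl fun σ hσ => continuation_of_mem_seqs hπ hσ,
    Finset.sum_add_distrib, Finset.sum_ite_eq', Finset.sum_ite_eq', if_pos (hπ j)]
  ring

lemma dotProduct_continuation {c : T.Seq → ℝ} (hc : ∀ j, c (π j) = 0) :
    c ⬝ᵥ T.continuation π ρ = c ρ := by
  rw [dotProduct, Finset.sum_eq_single ρ (fun τ _ hτ => ?_) (by simp), continuation_self, mul_one]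
  by_contra h
  rcases eq_or_exists_of_continuation_ne_zero (right_ne_zero_of_mul h) with h' | ⟨j, rfl⟩
  · exact hτ h'
  · exact left_ne_zero_of_mul h (hc j)

end continuation

lemma continuation_root_mem_poly {π : T.Dp → T.Seq} (hπ : T.IsPolicy π) :
    T.continuation π T.root ∈ T.poly :=
  mem_poly_iff.2 ⟨fun _ => continuation_nonneg, continuation_self, fun j => by
    simp [constraintVec_dotProduct_continuation hπ, root_notMem_seqs]⟩

lemma add_mem_poly {x v : T.Seq → ℝ} (hx : x ∈ T.poly) (hv : ∀ σ, 0 ≤ v σ) (hv₀ : v T.root = 0)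
    (hvc : ∀ j, T.constraintVec j ⬝ᵥ v = 0) : x + v ∈ T.poly := by
  obtain ⟨hx0, hx1, hxc⟩ := mem_poly_iff.1 hx
  exact mem_poly_iff.2 ⟨fun σ => add_nonneg (hx0 σ) (hv σ), by simp [hx1, hv₀],
    fun j => by simp [dotProduct_add, hxc, hvc]⟩

variable (T) in
noncomputable def uniformPoint (τ : T.Seq) : ℝ :=
  match h : T.parentDp τ with
  | none => 1
  | some j =>
    have : T.depth (T.parentSeq j) < T.depth τ :=
      depth_parentSeq_lt_of_mem_seqs ((T.parentDp_spec τ j).1 h)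
    uniformPoint (T.parentSeq j) / (T.seqs j).card
termination_by T.depth τ

lemma uniformPoint_of_parentDp_eq_none {τ : T.Seq} (h : T.parentDp τ = none) :
    T.uniformPoint τ = 1 := by
  rw [uniformPoint]; split <;> simp_all

lemma uniformPoint_of_mem_seqs {τ : T.Seq} {j : T.Dp} (h : τ ∈ T.seqs j) :
    T.uniformPoint τ = T.uniformPoint (T.parentSeq j) / (T.seqs j).card := by
  have hτ := (T.parentDp_spec τ j).2 h
  rw [uniformPoint]; split <;> simp_all

lemma uniformPoint_pos (τ : T.Seq) : 0 < T.uniformPoint τ := by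
  induction h : T.depth τ using Nat.strong_induction_on generalizing τ with
  | _ n ih =>
    rcases hτ : T.parentDp τ with _ | j
    · simp [uniformPoint_of_parentDp_eq_none hτ]
    · have hmem := (T.parentDp_spec τ j).1 hτ
      rw [uniformPoint_of_mem_seqs hmem]
      exact div_pos (ih _ (h ▸ depth_parentSeq_lt_of_mem_seqs hmem) _ rfl)
        (by exact_mod_cast (T.seqs_nonempty j).card_pos)

lemma uniformPoint_mem_poly : T.uniformPoint ∈ T.poly := by
  refine ⟨fun τ => (uniformPoint_pos τ).le, uniformPoint_of_parentDp_eq_none T.parentDp_root,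
    fun j => ?_⟩
  have hcard : ((T.seqs j).card : ℝ) ≠ 0 := by exact_mod_cast (T.seqs_nonempty j).card_ne_zero
  rw [Finset.sum_congr rfl fun σ => uniformPoint_of_mem_seqs, Finset.sum_const, nsmul_eq_mul,
    mul_div_cancel₀ _ hcard]

open Filter in
lemma exists_pos_forall_pos_add_mul {ι : Type*} [Finite ι] {p : ι → ℝ} (hp : ∀ i, 0 < p i)
    (w : ι → ℝ) : ∃ ε > 0, ∀ i, 0 < p i + ε * w i := by
  have hev : ∀ᶠ ε in nhds (0 : ℝ), ∀ i, 0 < p i + ε * w i :=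
    eventually_all.2 fun i => ((continuous_const.add (continuous_id.mul continuous_const)).tendsto
      (0 : ℝ)).eventually_const_lt (by simpa using hp i)
  obtain ⟨δ, hδ, h⟩ := Metric.eventually_nhds_iff.1 hev
  exact ⟨δ / 2, half_pos hδ, h (by simp [abs_of_pos hδ, hδ])⟩

lemma dotProduct_eq_zero_of_conserving {d v : T.Seq → ℝ} (hd : ∀ x ∈ T.poly, d ⬝ᵥ x = 0)
    (hv : ∀ j, T.constraintVec j ⬝ᵥ v = 0) : d ⬝ᵥ v = 0 := by
  have hp := uniformPoint_mem_poly (T := T)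
  set w := v - v T.root • T.uniformPoint
  have hw : ∀ j, T.constraintVec j ⬝ᵥ w = 0 := by
    simp [w, dotProduct_sub, dotProduct_smul, hv, constraintVec_dotProduct_eq_zero hp]
  obtain ⟨ε, hε, hεw⟩ := exists_pos_forall_pos_add_mul uniformPoint_pos w
  have hmem : T.uniformPoint + ε • w ∈ T.poly := mem_poly_iff.2 ⟨fun τ => (hεw τ).le,
    by simp [w, hp.2.1], fun j => by
      simp [dotProduct_add, dotProduct_smul, hw, constraintVec_dotProduct_eq_zero hp]⟩
  have hdp := hd _ hp
  have hdw : d ⬝ᵥ w = 0 := by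
    simpa [dotProduct_add, dotProduct_smul, hdp, hε.ne'] using hd _ hmem
  simpa [w, dotProduct_sub, dotProduct_smul, hdp] using hdw

lemma exists_sum_smul_constraintVec_eq {d : T.Seq → ℝ} (hd : ∀ x ∈ T.poly, d ⬝ᵥ x = 0) :
    ∃ b : T.Dp → ℝ, ∑ j, b j • T.constraintVec j = d := by
  let e := dotProductEquiv ℝ T.Seq
  have hspan : e d ∈ Submodule.span ℝ (Set.range fun j => e (T.constraintVec j)) :=
    mem_span_of_iInf_ker_le_ker fun v hv => by
      simp only [Submodule.mem_iInf, LinearMap.mem_ker] at hv ⊢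
      exact dotProduct_eq_zero_of_conserving hd hv
  obtain ⟨b, hb⟩ := (Submodule.mem_span_range_iff_exists_fun ℝ).1 hspan
  exact ⟨b, e.injective (by simpa [map_sum, map_smul] using hb)⟩

lemma sum_smul_constraintVec_dotProduct_continuation {π : T.Dp → T.Seq} (hπ : T.IsPolicy π)
    (b : T.Dp → ℝ) {j : T.Dp} {ρ : T.Seq} (hρ : ρ ∈ T.seqs j) :
    (∑ j', b j' • T.constraintVec j') ⬝ᵥ T.continuation π ρ = -b j := by
  simp only [sum_dotProduct, smul_dotProduct, constraintVec_dotProduct_continuation hπ,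
    smul_eq_mul, mul_neg, mul_ite, mul_one, mul_zero, Finset.sum_neg_distrib]
  rw [Finset.sum_eq_single j (fun j' _ hj' => if_neg fun h => hj' (eq_of_mem_seqs h hρ))
    (by simp), if_pos hρ]

lemma coeff_nonneg_of_sum_smul_constraintVec_eq {A : T.Seq → T.Seq → ℝ}
    (hA : ∀ σ τ, 0 ≤ A σ τ) {π : T.Dp → T.Seq} (hπ : T.IsPolicy π) {j : T.Dp}
    (hzero : ∀ j', A (T.parentSeq j) (π j') = 0) {b : T.Dp → ℝ}
    (hb : ∑ j', b j' • T.constraintVec j' = T.constraintVec j ᵥ* of A) (j' : T.Dp) :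
    0 ≤ b j' := by
  have hdot := sum_smul_constraintVec_dotProduct_continuation hπ b (hπ j')
  rw [hb, ← dotProduct_mulVec, constraintVec_dotProduct] at hdot
  have hparent : (of A *ᵥ T.continuation π (π j')) (T.parentSeq j) = 0 :=
    (dotProduct_continuation hzero).trans (hzero j')
  have hsum : 0 ≤ ∑ σ ∈ T.seqs j, (of A *ᵥ T.continuation π (π j')) σ :=
    Finset.sum_nonneg fun σ _ => Finset.sum_nonneg fun τ _ =>
      mul_nonneg (hA σ τ) continuation_nonneg
  linarith

variable (T) in
def MinZeroAt (c : T.Seq → ℝ) (j : T.Dp) : Prop :=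
  (∀ σ ∈ T.seqs j, 0 ≤ c σ) ∧ ∃ σ ∈ T.seqs j, c σ = 0

lemma constraintVec_apply_of_mem_seqs {j j' : T.Dp} {σ : T.Seq} (hσ : σ ∈ T.seqs j)
    (hdepth : T.depth (T.parentSeq j') ≤ T.depth (T.parentSeq j)) :
    T.constraintVec j' σ = if j = j' then -1 else 0 := by
  have hσ' : σ ≠ T.parentSeq j' := fun h =>
    (h ▸ hdepth).not_gt (depth_parentSeq_lt_of_mem_seqs hσ)
  have hmem : σ ∈ T.seqs j' ↔ j = j' := ⟨eq_of_mem_seqs hσ, fun h => h ▸ hσ⟩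
  simp only [constraintVec_apply, if_neg hσ', hmem]
  split_ifs <;> norm_num

lemma exists_forall_minZeroAt (c : T.Seq → ℝ) :
    ∃ c' : T.Seq → ℝ, (∀ x ∈ T.poly, c' ⬝ᵥ x = c ⬝ᵥ x) ∧ ∀ j, T.MinZeroAt c' j := by
  suffices ∀ s : Finset T.Dp,
      ∃ c' : T.Seq → ℝ, (∀ x ∈ T.poly, c' ⬝ᵥ x = c ⬝ᵥ x) ∧ ∀ j ∈ s, T.MinZeroAt c' j by
    simpa using this Finset.univ
  intro s
  -- Decision points are added bottom-up, so the new step leaves the actions of earlier ones alone.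
  induction s using Finset.induction_on_min_value (fun j => T.depth (T.parentSeq j)) with
  | empty => exact ⟨c, fun _ _ => rfl, by simp⟩
  | insert a s ha hmin ih =>
    obtain ⟨c', hc', hs⟩ := ih
    obtain ⟨σ₀, hσ₀, hmin₀⟩ := (T.seqs a).exists_min_image c' (T.seqs_nonempty a)
    refine ⟨c' + c' σ₀ • T.constraintVec a, fun x hx => ?_, fun j hj => ?_⟩
    · rw [add_dotProduct, smul_dotProduct, constraintVec_dotProduct_eq_zero hx, smul_zero,
        add_zero, hc' x hx]
    rcases Finset.mem_insert.1 hj with rfl | hjs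
    · have happly : ∀ σ ∈ T.seqs j, (c' + c' σ₀ • T.constraintVec j) σ = c' σ - c' σ₀ :=
        fun σ hσ => by simp [constraintVec_apply_of_mem_seqs hσ le_rfl, sub_eq_add_neg]
      exact ⟨fun σ hσ => by rw [happly σ hσ]; linarith [hmin₀ σ hσ],
        σ₀, hσ₀, by rw [happly σ₀ hσ₀, sub_self]⟩
    · have happly : ∀ σ ∈ T.seqs j, (c' + c' σ₀ • T.constraintVec a) σ = c' σ := fun σ hσ => by
        simp [constraintVec_apply_of_mem_seqs hσ (hmin j hjs),
          show j ≠ a from fun h => ha (h ▸ hjs)]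
      obtain ⟨hnn, σ, hσ, hσ0⟩ := hs j hjs
      exact ⟨fun σ hσ => (happly σ hσ).symm ▸ hnn σ hσ, σ, hσ, (happly σ hσ).trans hσ0⟩

lemma nonneg_of_forall_nonneg_add_mul {a b : ℝ} (h : ∀ t : ℝ, 0 ≤ t → 0 ≤ a + t * b) :
    0 ≤ b := by
  by_contra! hb
  have ht : (|a| + 1) / -b * b = -(|a| + 1) := by field_simp [hb.ne]
  linarith [h _ (div_nonneg (by positivity : 0 ≤ |a| + 1) (neg_nonneg.2 hb.le)), le_abs_self a]

lemma exists_nonneg_row {c : T.Seq → ℝ} (hc : ∀ x ∈ T.poly, 0 ≤ c ⬝ᵥ x) :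
    ∃ c' : T.Seq → ℝ, (∀ x ∈ T.poly, c' ⬝ᵥ x = c ⬝ᵥ x) ∧ (∀ σ, 0 ≤ c' σ) ∧
      ∀ j, ∃ σ ∈ T.seqs j, c' σ = 0 := by
  obtain ⟨c', hc', hmin⟩ := exists_forall_minZeroAt c
  choose π hπ hzero using fun j => (hmin j).2
  have hroot := continuation_root_mem_poly hπ
  refine ⟨c', hc', fun σ => ?_, fun j => (hmin j).2⟩
  rcases hσ : T.parentDp σ with _ | j
  · by_cases hσr : σ = T.root
    · rw [hσr, ← dotProduct_continuation hzero, hc' _ hroot]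
      exact hc _ hroot
    -- `σ` is the root of a subtree that is not below the root, so `co X` is unbounded along it
    refine nonneg_of_forall_nonneg_add_mul (a := c' T.root) fun t ht => ?_
    have hmem : T.continuation π T.root + t • T.continuation π σ ∈ T.poly :=
      add_mem_poly hroot (fun τ => mul_nonneg ht continuation_nonneg)
        (by simp [continuation_root hπ hσr]) fun j => by
          simp [dotProduct_smul, constraintVec_dotProduct_continuation hπ,
            notMem_seqs_of_parentDp_eq_none hσ j]
    have := hc _ hmem
    rwa [← hc' _ hmem, dotProduct_add, dotProduct_smul, dotProduct_continuation hzero,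
      dotProduct_continuation hzero, smul_eq_mul] at this
  · exact (hmin j).1 σ ((T.parentDp_spec σ j).1 hσ)

lemma exists_utc_of_mulVec_mem_poly {A : T.Seq → T.Seq → ℝ}
    (hA : ∀ x ∈ T.poly, of A *ᵥ x ∈ T.poly) :
    ∃ (A' : T.Seq → T.Seq → ℝ) (B : T.Dp → T.Dp → ℝ),
      T.UTC A' B ∧ ∀ x ∈ T.poly, of A' *ᵥ x = of A *ᵥ x := by
  have hrows : ∀ σ, ∃ r : T.Seq → ℝ, (σ = T.root → r = Pi.single T.root 1) ∧ (∀ τ, 0 ≤ r τ) ∧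
      (∀ j, ∃ τ ∈ T.seqs j, r τ = 0) ∧ ∀ x ∈ T.poly, r ⬝ᵥ x = A σ ⬝ᵥ x := by
    intro σ
    by_cases hσ : σ = T.root
    · refine ⟨Pi.single T.root 1, fun _ => rfl, fun τ => ?_, fun j => ?_, fun x hx => ?_⟩
      · rw [Pi.single_apply]; split_ifs <;> norm_num
      · obtain ⟨τ, hτ⟩ := T.seqs_nonempty j
        exact ⟨τ, hτ, Pi.single_eq_of_ne (fun h : τ = T.root => root_notMem_seqs j (h ▸ hτ)) _⟩
      · rw [single_dotProduct, one_mul, (mem_poly_iff.1 hx).2.1, hσ]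
        exact (mem_poly_iff.1 (hA x hx)).2.1.symm
    · obtain ⟨r, h1, h2, h3⟩ := exists_nonneg_row fun x hx => (hA x hx).1 σ
      exact ⟨r, fun h => absurd h hσ, h2, h3, h1⟩
  choose A' hroot hnn hzero hA' using hrows
  have hA'x : ∀ x ∈ T.poly, of A' *ᵥ x = of A *ᵥ x := fun x hx => funext fun σ => hA' σ x hx
  have hdefect : ∀ j, ∃ b : T.Dp → ℝ,
      ∑ j', b j' • T.constraintVec j' = T.constraintVec j ᵥ* of A' := fun j =>
    exists_sum_smul_constraintVec_eq fun x hx => by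
      rw [← dotProduct_mulVec, hA'x x hx, constraintVec_dotProduct_eq_zero (hA x hx)]
  choose B hB using hdefect
  refine ⟨A', B, ⟨utc_flow_iff.2 fun j => (hB j).symm, by simp [hroot],
    fun σ' h => by simp [hroot, h], hnn, fun j j' => ?_⟩, hA'x⟩
  choose π hπ hπ0 using hzero (T.parentSeq j)
  exact coeff_nonneg_of_sum_smul_constraintVec_eq hnn hπ hπ0 (hB j) j'

end TFDP

/-- main equivalence: the UTC deviations coincide exactly with the
linear deviations of a sequence-form polytope. -/
theorem utc_eq_linear (T : TFDP) :
    {f : (T.Seq → ℝ) → (T.Seq → ℝ) |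
        ∃ (A : T.Seq → T.Seq → ℝ) (B : T.Dp → T.Dp → ℝ),
          T.UTC A B ∧ ∀ x ∈ T.poly, f x = T.mulVec A x}
      = {f : (T.Seq → ℝ) → (T.Seq → ℝ) |
          ∃ A : T.Seq → T.Seq → ℝ,
            (∀ x ∈ T.poly, f x = T.mulVec A x) ∧ ∀ x ∈ T.poly, T.mulVec A x ∈ T.poly} := by
  ext f
  simp only [Set.mem_ofPred_eq, TFDP.mulVec_eq]
  constructor
  · rintro ⟨A, B, hutc, hf⟩
    exact ⟨A, hf, fun x hx => TFDP.mulVec_mem_poly_of_utc hutc hx⟩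
  · rintro ⟨A, hf, hmaps⟩
    obtain ⟨A', B, hutc, hA'⟩ := TFDP.exists_utc_of_mulVec_mem_poly hmaps
    exact ⟨A', B, hutc, fun x hx => (hf x hx).trans (hA' x hx).symm⟩
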